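/- Let R be a ring with unity, let p, a, q, m ∈ R and let m' ∈ R satisfy m*m'*m = m. Then u = m*q*a*p + 1 − m*m' is invertible in R if and only if v = q*a*p*m + 1 − m'*m is invertible in R. -/
import Mathlib

lemma jac_aux {R : Type*} [Ring R] (x y : R) (h : IsUnit (1 - x * y)) :
    IsUnit (1 - y * x) := by
  refine ⟨⟨1 - y * x, 1 + y * h.unit.inv * x, ?_, ?_⟩, rfl⟩
  · calc
      (1 - y * x) * (1 + y * (IsUnit.unit h).inv * x) =
          1 - y * x + y * ((1 - x * y) * h.unit.inv) * x := by noncomm_ring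
      _ = 1 := by simp only [Units.inv_eq_val_inv, IsUnit.mul_val_inv, mul_one, sub_add_cancel]
  · calc
      (1 + y * (IsUnit.unit h).inv * x) * (1 - y * x) =
          1 - y * x + y * (h.unit.inv * (1 - x * y)) * x := by noncomm_ring
      _ = 1 := by simp only [Units.inv_eq_val_inv, IsUnit.val_inv_mul, mul_one, sub_add_cancel]

/-- `u = m*q*a*p + 1 - m*m'` is invertible iff `v = q*a*p*m + 1 - m'*m` is invertible. -/
theorem stmt3 {R : Type*} [Ring R] (p a q m m' : R) (hm : m * m' * m = m) :
    IsUnit (m * q * a * p + 1 - m * m') ↔ IsUnit (q * a * p * m + 1 - m' * m) := by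
  have h1 : m * q * a * p + 1 - m * m' = 1 - m * (m' - q * a * p) := by noncomm_ring
  have h2 : q * a * p * m + 1 - m' * m = 1 - (m' - q * a * p) * m := by noncomm_ring
  rw [h1, h2]
  exact ⟨jac_aux m (m' - q * a * p), jac_aux (m' - q * a * p) m⟩
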